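/- arXiv:1506.03651 — 4 statements merged into one kernel-verified Lean document; each statement's English description precedes it below -/
import Mathlib

section
/- For all integers i, j ≥ 0, all integers n ≥ 0, and all x ∈ ℝ, one has x^i · (d/dx)^j H_n(x) = (Γ^j Δ^i h)(n, x), where h(n, x) = H_n(x) and the operators Δ, Γ act on the integer variable n. (In other words, the operator x^i ∂^j in x and the difference operator Γ^j Δ^i in n have exactly the same effect on the classical Hermite polynomials.) -/
noncomputable section

/-- Physicists' Hermite polynomials indexed by naturals. -/
def hermN : ℕ → Polynomial ℝ
  | 0 => 1
  | 1 => Polynomial.C 2 * Polynomial.X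
  | (n + 2) => Polynomial.C 2 * Polynomial.X * hermN (n + 1)
      - Polynomial.C (2 * ((n : ℝ) + 1)) * hermN n

/-- Physicists' Hermite polynomials indexed by integers, `0` for negative index. -/
def Herm (n : ℤ) : Polynomial ℝ := if 0 ≤ n then hermN n.toNat else 0

/-- Hermite polynomial as a real function. -/
def H (n : ℤ) : ℝ → ℝ := fun x => (Herm n).eval x

/-- The shift operator in the discrete variable `n`. -/
def Θ (g : ℤ → ℝ) : ℤ → ℝ := fun n => g (n + 1)

/-- The degree-raising operator `Δ`: `(Δg)(n) = ½ g(n+1) + n g(n-1)`. -/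
def Δop (g : ℤ → ℝ) : ℤ → ℝ := fun n => (1 / 2) * g (n + 1) + (n : ℝ) * g (n - 1)

/-- The degree-lowering operator `Γ`: `(Γg)(n) = 2n g(n-1)`. -/
def Γop (g : ℤ → ℝ) : ℤ → ℝ := fun n => 2 * (n : ℝ) * g (n - 1)

lemma Herm_ofNat (m : ℕ) : Herm (m : ℤ) = hermN m := by
  simp [Herm]

lemma H_ofNat (m : ℕ) (x : ℝ) : H (m : ℤ) x = (hermN m).eval x := by
  simp [H, Herm_ofNat]

lemma H_neg (n : ℤ) (hn : n < 0) (x : ℝ) : H n x = 0 := by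
  simp [H, Herm, not_le.mpr hn]

/-- Three-term recurrence for `H`, valid for `n ≥ 0`. -/
lemma H_rec (n : ℤ) (hn : 0 ≤ n) (x : ℝ) :
    x * H n x = (1 / 2) * H (n + 1) x + (n : ℝ) * H (n - 1) x := by
  lift n to ℕ using hn
  cases n with
  | zero =>
      have h0 : H (0 : ℤ) x = 1 := by
        have := H_ofNat 0 x
        simpa [hermN] using this
      have h1 : H (1 : ℤ) x = 2 * x := by
        have := H_ofNat 1 x
        simpa [hermN] using this
      simp only [Nat.cast_zero]
      norm_num
      rw [h0, h1]
      ring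
  | succ m =>
      have e1 : ((m:ℤ) + 1) + 1 = ((m + 2 : ℕ) : ℤ) := by push_cast; ring
      have e2 : ((m:ℤ) + 1) - 1 = ((m : ℕ) : ℤ) := by omega
      rw [show (m:ℤ) + 1 = ((m+1 : ℕ) : ℤ) by push_cast; ring] at *
      rw [e1, e2, H_ofNat, H_ofNat, H_ofNat]
      have : hermN (m + 2) = Polynomial.C 2 * Polynomial.X * hermN (m + 1)
          - Polynomial.C (2 * ((m : ℝ) + 1)) * hermN m := by
        simp [hermN]
      rw [this]
      simp [Polynomial.eval_sub, Polynomial.eval_mul]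
      ring

/-- Derivative of `hermN (m+1)`. -/
lemma hermN_deriv : ∀ m : ℕ,
    (hermN (m + 1)).derivative = Polynomial.C (2 * ((m : ℝ) + 1)) * hermN m := by
  intro m
  induction m using Nat.twoStepInduction with
  | zero => simp [hermN]
  | one =>
      show (hermN 2).derivative = _
      simp [hermN]
      ring_nf
  | more m ih1 ih2 =>
      have hrec : hermN (m + 3) = Polynomial.C 2 * Polynomial.X * hermN (m + 2)
          - Polynomial.C (2 * (((m + 1 : ℕ) : ℝ) + 1)) * hermN (m + 1) := by
        show hermN ((m + 1) + 2) = _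
        simp [hermN]
      push_cast at hrec
      have hrec2 : hermN (m + 2) = Polynomial.C 2 * Polynomial.X * hermN (m + 1)
          - Polynomial.C (2 * ((m : ℝ) + 1)) * hermN m := by
        simp [hermN]
      rw [show m + 2 + 1 = m + 3 by ring, hrec]
      rw [show m + 1 + 1 = m + 2 by ring] at ih2
      push_cast at ih2
      simp only [Polynomial.derivative_sub, Polynomial.derivative_mul, Polynomial.derivative_C,
        Polynomial.derivative_X, ih1, ih2]
      rw [hrec2]
      apply Polynomial.funext
      intro x
      simp only [Polynomial.eval_sub, Polynomial.eval_add, Polynomial.eval_mul, Polynomial.eval_C,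
        Polynomial.eval_X, Polynomial.eval_zero, Polynomial.eval_one]
      push_cast
      ring

lemma Herm_deriv (n : ℤ) (hn : 0 ≤ n) :
    (Herm n).derivative = Polynomial.C (2 * (n : ℝ)) * Herm (n - 1) := by
  lift n to ℕ using hn
  cases n with
  | zero =>
      have : Herm ((0:ℕ) : ℤ) = hermN 0 := Herm_ofNat 0
      rw [this]
      have hneg : Herm (((0:ℕ):ℤ) - 1) = 0 := by simp [Herm]
      rw [hneg]
      simp [hermN]
  | succ m =>
      rw [Herm_ofNat, show ((m+1:ℕ):ℤ) - 1 = ((m:ℕ):ℤ) by push_cast; ring, Herm_ofNat]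
      rw [hermN_deriv m]
      push_cast
      ring_nf

/-- iterated deriv of a polynomial function. -/
lemma iteratedDeriv_poly (j : ℕ) (p : Polynomial ℝ) (x : ℝ) :
    iteratedDeriv j (fun y => p.eval y) x = (Polynomial.derivative^[j] p).eval x := by
  induction j generalizing p x with
  | zero => simp
  | succ k ih =>
      rw [iteratedDeriv_succ']
      have : deriv (fun y => p.eval y) = fun y => p.derivative.eval y := by
        funext y; exact Polynomial.deriv p
      rw [this, ih, Function.iterate_succ_apply]

/-- `Γop` iterates only see values at nonnegative arguments. -/
lemma Γ_congr (j : ℕ) (g₁ g₂ : ℤ → ℝ) (hg : ∀ m : ℤ, 0 ≤ m → g₁ m = g₂ m) :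
    ∀ n : ℤ, 0 ≤ n → Γop^[j] g₁ n = Γop^[j] g₂ n := by
  induction j with
  | zero => intro n hn; exact hg n hn
  | succ k ih =>
      intro n hn
      rw [Function.iterate_succ_apply', Function.iterate_succ_apply']
      show 2 * (n : ℝ) * Γop^[k] g₁ (n - 1) = 2 * (n : ℝ) * Γop^[k] g₂ (n - 1)
      rcases eq_or_lt_of_le hn with h | h
      · rw [← h]; simp
      · rw [ih (n - 1) (by omega)]

/-- `Γop` iterates commute with scalar multiplication. -/
lemma Γ_smul (j : ℕ) (c : ℝ) (g : ℤ → ℝ) :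
    ∀ n : ℤ, Γop^[j] (fun m => c * g m) n = c * Γop^[j] g n := by
  induction j with
  | zero => intro n; rfl
  | succ k ih =>
      intro n
      rw [Function.iterate_succ_apply', Function.iterate_succ_apply']
      show 2 * (n : ℝ) * Γop^[k] (fun m => c * g m) (n - 1) = c * (2 * (n : ℝ) * Γop^[k] g (n - 1))
      rw [ih (n - 1)]
      ring

/-- `Δop` iterates produce multiplication by `x^i`. -/
lemma Δ_pow (x : ℝ) : ∀ i : ℕ, ∀ n : ℤ, 0 ≤ n →
    Δop^[i] (fun m => H m x) n = x ^ i * H n x := by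
  intro i
  induction i with
  | zero => intro n hn; simp
  | succ k ih =>
      intro n hn
      rw [Function.iterate_succ_apply']
      show (1 / 2) * Δop^[k] (fun m => H m x) (n + 1) + (n : ℝ) * Δop^[k] (fun m => H m x) (n - 1)
          = x ^ (k + 1) * H n x
      rw [ih (n + 1) (by omega)]
      have hterm : (n : ℝ) * Δop^[k] (fun m => H m x) (n - 1) = (n : ℝ) * (x ^ k * H (n - 1) x) := by
        rcases eq_or_lt_of_le hn with h | h
        · rw [← h]; simp
        · rw [ih (n - 1) (by omega)]
      rw [hterm]
      have := H_rec n hn x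
      calc (1 / 2) * (x ^ k * H (n + 1) x) + (n : ℝ) * (x ^ k * H (n - 1) x)
          = x ^ k * ((1 / 2) * H (n + 1) x + (n : ℝ) * H (n - 1) x) := by ring
        _ = x ^ k * (x * H n x) := by rw [← this]
        _ = x ^ (k + 1) * H n x := by ring

lemma derivative_iterate_C_mul {k : ℕ} {c : ℝ} {p : Polynomial ℝ} :
    Polynomial.derivative^[k] (Polynomial.C c * p) = Polynomial.C c * Polynomial.derivative^[k] p := by
  induction k generalizing p with
  | zero => rfl
  | succ l ihl =>
      rw [Function.iterate_succ_apply, Function.iterate_succ_apply, Polynomial.derivative_C_mul,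
        ihl]

/-- `Γop` iterates compute derivatives. -/
lemma Γ_deriv (x : ℝ) : ∀ j : ℕ, ∀ n : ℤ, 0 ≤ n →
    Γop^[j] (fun m => H m x) n = (Polynomial.derivative^[j] (Herm n)).eval x := by
  intro j
  induction j with
  | zero => intro n hn; simp [H]
  | succ k ih =>
      intro n hn
      rw [Function.iterate_succ_apply']
      show 2 * (n : ℝ) * Γop^[k] (fun m => H m x) (n - 1) = _
      rw [Function.iterate_succ_apply, Herm_deriv n hn]
      rw [derivative_iterate_C_mul]
      rcases eq_or_lt_of_le hn with h | h
      · rw [← h]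
        simp
      · rw [ih (n - 1) (by omega)]
        simp

/-- The operator `x^i ∂^j` in `x` and the difference operator `Γ^j Δ^i` in `n`
have the same effect on the classical Hermite polynomials. -/
theorem stmt_0 (i j : ℕ) (n : ℤ) (hn : 0 ≤ n) (x : ℝ) :
    x ^ i * iteratedDeriv j (H n) x = (Γop^[j] (Δop^[i] (fun m => H m x))) n := by
  have step1 : (Γop^[j] (Δop^[i] (fun m => H m x))) n
      = (Γop^[j] (fun m => x ^ i * H m x)) n :=
    Γ_congr j _ _ (fun m hm => Δ_pow x i m hm) n hn
  have step2 : (Γop^[j] (fun m => x ^ i * H m x)) n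
      = x ^ i * (Γop^[j] (fun m => H m x)) n := Γ_smul j (x ^ i) (fun m => H m x) n
  rw [step1, step2, Γ_deriv x j n hn]
  congr 1
  exact iteratedDeriv_poly j (Herm n) x

end
end

section
/- For every smooth function y : ℝ → ℝ and every x ∈ ℝ such that η_j(x) ≠ 0 for all 1 ≤ j ≤ ℓ−1, the order-ℓ operator A factors as A = A_ℓ ∘ ⋯ ∘ A_2 ∘ A_1; that is, (A_ℓ(A_{ℓ−1}(⋯(A_1(y))⋯)))(x) = Wr[H_{k_1}, …, H_{k_ℓ}, y](x). -/
noncomputable section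

/-- The Wronskian determinant of a finite family of functions. -/
def Wr {m : ℕ} (f : Fin m → ℝ → ℝ) (x : ℝ) : ℝ :=
  Matrix.det (Matrix.of fun i j : Fin m => iteratedDeriv (j : ℕ) (f i) x)

/-- `eta k j x = Wr[H_{k 1}, …, H_{k j}](x)` (1-indexed), with `eta k 0 = 1`. -/
def eta (k : ℕ → ℕ) (j : ℕ) : ℝ → ℝ :=
  fun x => Wr (fun i : Fin j => H (k (i.1 + 1) : ℤ)) x

/-- The order-`l` operator `A(y)(x) = Wr[H_{k 1}, …, H_{k l}, y](x)`. -/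
def Aop (k : ℕ → ℕ) (l : ℕ) (y : ℝ → ℝ) : ℝ → ℝ :=
  fun x => Wr (Fin.snoc (fun i : Fin l => H (k (i.1 + 1) : ℤ)) y) x

/-- The first-order factor `A_j(y) = (η_j y' - η_j' y)/η_{j-1}`. -/
def Astep (k : ℕ → ℕ) (j : ℕ) (y : ℝ → ℝ) : ℝ → ℝ :=
  fun x => (eta k j x * deriv y x - deriv (eta k j) x * y x) / eta k (j - 1) x

/-- The composition `A_j ∘ ⋯ ∘ A_1`. -/
def Aiter (k : ℕ → ℕ) : ℕ → (ℝ → ℝ) → (ℝ → ℝ)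
  | 0 => id
  | (j + 1) => fun y => Astep k (j + 1) (Aiter k j y)

namespace WrFact

open Matrix Finset

/-- embedding of `Fin m` into `Fin (m+2)` (first `m` indices). -/
def emb (m : ℕ) : Fin m → Fin (m+2) := fun i => i.castSucc.castSucc

def rA (m : ℕ) : Fin (m+2) := (Fin.last m).castSucc
def rB (m : ℕ) : Fin (m+2) := Fin.last (m+1)

variable {R : Type*} [CommRing R]

lemma dodgson_cancel (m : ℕ) (M : Matrix (Fin (m+2)) (Fin (m+2)) R) :
    M.det * ((M.submatrix ((rA m).succAbove) ((rA m).succAbove)).det *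
        (M.submatrix ((rB m).succAbove) ((rB m).succAbove)).det -
      (M.submatrix ((rA m).succAbove) ((rB m).succAbove)).det *
        (M.submatrix ((rB m).succAbove) ((rA m).succAbove)).det)
    = M.det * (M.det * (M.submatrix (emb m) (emb m)).det) := by
  classical
  set C : Matrix (Fin (m+2)) (Fin (m+2)) R :=
    Matrix.of (fun i j => if (j:ℕ) < m then (if i = j then (1:R) else 0) else adjugate M i j)
    with hC
  -- value of M * C
  have hMC : M * C = Matrix.of (fun i j : Fin (m+2) => if (j:ℕ) < m then M i j
      else (M.det • (1 : Matrix (Fin (m+2)) (Fin (m+2)) R)) i j) := by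
    ext i j
    by_cases h : (j:ℕ) < m
    · simp [Matrix.mul_apply, hC, h, mul_ite]
    · have h2 : (M * C) i j = (M * adjugate M) i j := by
        simp [Matrix.mul_apply, hC, h]
      rw [h2, Matrix.mul_adjugate]
      simp [h]
  -- determinant of C
  have hrA : finSumFinEquiv (Sum.inr (0 : Fin 2)) = rA m := by
    apply Fin.ext; simp [rA]
  have hrB : finSumFinEquiv (Sum.inr (1 : Fin 2)) = rB m := by
    apply Fin.ext; simp [rB]
  have hdetC : C.det =
      (M.submatrix ((rA m).succAbove) ((rA m).succAbove)).det *
        (M.submatrix ((rB m).succAbove) ((rB m).succAbove)).det -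
      (M.submatrix ((rA m).succAbove) ((rB m).succAbove)).det *
        (M.submatrix ((rB m).succAbove) ((rA m).succAbove)).det := by
    have e1 := Matrix.det_submatrix_equiv_self finSumFinEquiv C
    have hblock : C.submatrix finSumFinEquiv finSumFinEquiv =
        Matrix.fromBlocks 1
          (Matrix.of fun i j => adjugate M (finSumFinEquiv (Sum.inl i)) (finSumFinEquiv (Sum.inr j)))
          0
          (Matrix.of fun i j : Fin 2 =>
            adjugate M (finSumFinEquiv (Sum.inr i)) (finSumFinEquiv (Sum.inr j))) := by
      ext i j
      cases i with
      | inl i =>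
        cases j with
        | inl j =>
          have hj : ((finSumFinEquiv (Sum.inl j) : Fin (m+2)) : ℕ) < m := by simp [Fin.is_lt]
          simp [hC, hj, Matrix.one_apply, Equiv.apply_eq_iff_eq]
        | inr j =>
          have hj : ¬ ((finSumFinEquiv (Sum.inr j) : Fin (m+2)) : ℕ) < m := by simp
          simp [hC, hj]
      | inr i =>
        cases j with
        | inl j =>
          have hj : ((finSumFinEquiv (Sum.inl j) : Fin (m+2)) : ℕ) < m := by simp [Fin.is_lt]
          have hne : Fin.natAdd m i ≠ Fin.castAdd 2 j := by
            simp [Fin.ext_iff]; omega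
          simp [hC, hj, hne]
        | inr j =>
          have hj : ¬ ((finSumFinEquiv (Sum.inr j) : Fin (m+2)) : ℕ) < m := by simp
          simp [hC, hj]
    rw [← e1, hblock, Matrix.det_fromBlocks_zero₂₁, Matrix.det_one, one_mul,
      Matrix.det_fin_two]
    show adjugate M (finSumFinEquiv (Sum.inr 0)) (finSumFinEquiv (Sum.inr 0)) *
        adjugate M (finSumFinEquiv (Sum.inr 1)) (finSumFinEquiv (Sum.inr 1)) -
        adjugate M (finSumFinEquiv (Sum.inr 0)) (finSumFinEquiv (Sum.inr 1)) *
        adjugate M (finSumFinEquiv (Sum.inr 1)) (finSumFinEquiv (Sum.inr 0)) = _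
    rw [hrA, hrB]
    rw [Matrix.adjugate_fin_succ_eq_det_submatrix, Matrix.adjugate_fin_succ_eq_det_submatrix,
      Matrix.adjugate_fin_succ_eq_det_submatrix, Matrix.adjugate_fin_succ_eq_det_submatrix]
    have cA : ((rA m : Fin (m+2)) : ℕ) = m := by simp [rA]
    have cB : ((rB m : Fin (m+2)) : ℕ) = m + 1 := by simp [rB]
    rw [cA, cB]
    have e2 : ((-1 : R)) ^ (m + m) = 1 := Even.neg_one_pow (Even.add_self m)
    have e3 : ((-1 : R)) ^ (m + 1 + (m + 1)) = 1 := Even.neg_one_pow (Even.add_self (m+1))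
    have e4 : ((-1 : R)) ^ (m + (m + 1)) = -1 := by
      have : Odd (m + (m + 1)) := by exact ⟨m, by ring⟩
      exact Odd.neg_one_pow this
    have e5 : ((-1 : R)) ^ (m + 1 + m) = -1 := by
      have : Odd (m + 1 + m) := ⟨m, by ring⟩
      exact Odd.neg_one_pow this
    rw [e2, e3, e4, e5]
    ring
  -- determinant of M * C
  have hdetMC : (M * C).det = (M.submatrix (emb m) (emb m)).det * (M.det * M.det) := by
    rw [hMC]
    set D : Matrix (Fin (m+2)) (Fin (m+2)) R := Matrix.of (fun i j : Fin (m+2) => if (j:ℕ) < m then M i j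
      else (M.det • (1 : Matrix (Fin (m+2)) (Fin (m+2)) R)) i j) with hD
    have e1 := Matrix.det_submatrix_equiv_self finSumFinEquiv D
    have hblock : D.submatrix finSumFinEquiv finSumFinEquiv =
        Matrix.fromBlocks (M.submatrix (emb m) (emb m)) 0
          (Matrix.of fun i j => M (finSumFinEquiv (Sum.inr i)) (finSumFinEquiv (Sum.inl j)))
          (M.det • (1 : Matrix (Fin 2) (Fin 2) R)) := by
      ext i j
      cases i with
      | inl i =>
        cases j with
        | inl j =>
          have hj : ((finSumFinEquiv (Sum.inl j) : Fin (m+2)) : ℕ) < m := by simp [Fin.is_lt]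
          have h1 : finSumFinEquiv (Sum.inl i) = emb m i := by apply Fin.ext; simp [emb]
          have h2 : finSumFinEquiv (Sum.inl j) = emb m j := by apply Fin.ext; simp [emb]
          have hj2 : ((emb m j : Fin (m+2)) : ℕ) < m := by simp [emb]
          simp [hD, h1, h2, hj2]
        | inr j =>
          have hj : ¬ ((finSumFinEquiv (Sum.inr j) : Fin (m+2)) : ℕ) < m := by simp
          have hne : Fin.castAdd 2 i ≠ Fin.natAdd m j := by
            simp [Fin.ext_iff]; omega
          simp [hD, hj, Matrix.one_apply, hne]
      | inr i =>
        cases j with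
        | inl j =>
          have hj : ((finSumFinEquiv (Sum.inl j) : Fin (m+2)) : ℕ) < m := by simp [Fin.is_lt]
          simp [hD, hj]
        | inr j =>
          have hj : ¬ ((finSumFinEquiv (Sum.inr j) : Fin (m+2)) : ℕ) < m := by simp
          by_cases hij : i = j
          · simp [hD, hj, Matrix.one_apply, hij]
          · have hne : Fin.natAdd m i ≠ Fin.natAdd m j := by
              simp [Fin.ext_iff] at hij ⊢; omega
            simp [hD, hj, Matrix.one_apply, hij, hne]
    rw [← e1, hblock, Matrix.det_fromBlocks_zero₁₂, Matrix.det_smul, Matrix.det_one]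
    simp [Fintype.card_fin]
    ring
  calc M.det * _ = M.det * C.det := by rw [hdetC]
    _ = (M * C).det := (Matrix.det_mul M C).symm
    _ = (M.submatrix (emb m) (emb m)).det * (M.det * M.det) := hdetMC
    _ = M.det * (M.det * (M.submatrix (emb m) (emb m)).det) := by ring


lemma dodgson (m : ℕ) (M : Matrix (Fin (m+2)) (Fin (m+2)) ℝ) :
    (M.submatrix ((rA m).succAbove) ((rA m).succAbove)).det *
        (M.submatrix ((rB m).succAbove) ((rB m).succAbove)).det -
      (M.submatrix ((rA m).succAbove) ((rB m).succAbove)).det *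
        (M.submatrix ((rB m).succAbove) ((rA m).succAbove)).det
    = M.det * (M.submatrix (emb m) (emb m)).det := by
  classical
  set X : Matrix (Fin (m+2)) (Fin (m+2)) (MvPolynomial (Fin (m+2) × Fin (m+2)) ℤ) :=
    Matrix.of (fun i j => MvPolynomial.X (i,j)) with hX
  have hXdet : X.det ≠ 0 := by
    intro h
    have h2 := congrArg (MvPolynomial.aeval (R := ℤ) (S₁ := ℤ)
      (fun p : Fin (m+2) × Fin (m+2) => if p.1 = p.2 then (1:ℤ) else 0)) h
    rw [map_zero] at h2
    rw [AlgHom.map_det] at h2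
    have h3 : ((MvPolynomial.aeval (R := ℤ) (S₁ := ℤ)
        (fun p : Fin (m+2) × Fin (m+2) => if p.1 = p.2 then (1:ℤ) else 0)).mapMatrix X)
        = (1 : Matrix (Fin (m+2)) (Fin (m+2)) ℤ) := by
      ext i j
      simp [hX, AlgHom.mapMatrix_apply, Matrix.map_apply, Matrix.one_apply]
    rw [h3, Matrix.det_one] at h2
    exact one_ne_zero h2
  have hgen := dodgson_cancel m X
  have hc := mul_left_cancel₀ hXdet hgen
  -- now push through the evaluation map
  set φ : MvPolynomial (Fin (m+2) × Fin (m+2)) ℤ →ₐ[ℤ] ℝ :=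
    MvPolynomial.aeval (fun p : Fin (m+2) × Fin (m+2) => M p.1 p.2) with hφ
  have hmapX : X.map φ = M := by
    ext i j
    simp [hX, hφ, Matrix.map_apply]
  have hsub : ∀ {p : ℕ} (f g : Fin p → Fin (m+2)),
      φ ((X.submatrix f g).det) = (M.submatrix f g).det := by
    intro p f g
    rw [AlgHom.map_det]
    congr 1
    ext i j
    simp [hX, hφ, Matrix.map_apply]
  have hdetX : φ X.det = M.det := by
    rw [AlgHom.map_det, AlgHom.mapMatrix_apply, hmapX]
  have h4 := congrArg φ hc
  rw [map_sub, _root_.map_mul, _root_.map_mul, _root_.map_mul, hdetX,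
    hsub, hsub, hsub, hsub, hsub] at h4
  exact h4


lemma wr_hasDerivAt (m : ℕ) (g : Fin (m+1) → ℝ → ℝ) (hg : ∀ i, ContDiff ℝ (⊤ : ℕ∞) (g i)) (x : ℝ) :
    HasDerivAt (Wr g)
      (Matrix.det (Matrix.of fun i j : Fin (m+1) =>
        iteratedDeriv (if j.1 < m then j.1 else m+1) (g i) x)) x := by
  classical
  have hfac : ∀ (r c : Fin (m+1)),
      HasDerivAt (fun t => iteratedDeriv c.1 (g r) t)
        (iteratedDeriv (c.1+1) (g r) x) x := by
    intro r c
    have hdiff : Differentiable ℝ (iteratedDeriv c.1 (g r)) :=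
      (hg r).differentiable_iteratedDeriv c.1 (by exact WithTop.coe_lt_coe.mpr (ENat.coe_lt_top _))
    have h1 := (hdiff x).hasDerivAt
    rw [iteratedDeriv_succ]
    exact h1
  have hprod : ∀ σ : Equiv.Perm (Fin (m+1)),
      HasDerivAt (fun t => ∏ i, iteratedDeriv i.1 (g (σ i)) t)
        (∑ c, (∏ j ∈ Finset.univ.erase c, iteratedDeriv j.1 (g (σ j)) x) •
          iteratedDeriv (c.1+1) (g (σ c)) x) x := by
    intro σ
    exact HasDerivAt.fun_finsetProd (u := Finset.univ)
      (f := fun i t => iteratedDeriv i.1 (g (σ i)) t)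
      (f' := fun i => iteratedDeriv (i.1+1) (g (σ i)) x)
      (fun i _ => hfac (σ i) i)
  have hsum : HasDerivAt
      (fun t => ∑ σ : Equiv.Perm (Fin (m+1)),
        (Equiv.Perm.sign σ : ℤ) • ∏ i, iteratedDeriv i.1 (g (σ i)) t)
      (∑ σ : Equiv.Perm (Fin (m+1)),
        (Equiv.Perm.sign σ : ℤ) • ∑ c, (∏ j ∈ Finset.univ.erase c,
          iteratedDeriv j.1 (g (σ j)) x) • iteratedDeriv (c.1+1) (g (σ c)) x) x :=
    HasDerivAt.fun_sum (fun σ _ => (hprod σ).fun_const_smul _)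
  have hW : Wr g = fun t => ∑ σ : Equiv.Perm (Fin (m+1)),
      (Equiv.Perm.sign σ : ℤ) • ∏ i, iteratedDeriv i.1 (g (σ i)) t := by
    funext t
    rw [Wr, Matrix.det_apply]
    rfl
  rw [hW]
  convert hsum using 1
  -- identify the derivative with the determinant
  set D : Fin (m+1) → ℝ := fun c => Matrix.det (Matrix.of fun r j : Fin (m+1) =>
    if j = c then iteratedDeriv (j.1+1) (g r) x else iteratedDeriv j.1 (g r) x) with hD
  have step2 : ∀ c : Fin (m+1), D c = ∑ σ : Equiv.Perm (Fin (m+1)),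
      (Equiv.Perm.sign σ : ℤ) • ((∏ j ∈ Finset.univ.erase c,
        iteratedDeriv j.1 (g (σ j)) x) • iteratedDeriv (c.1+1) (g (σ c)) x) := by
    intro c
    rw [hD]
    dsimp only
    rw [Matrix.det_apply]
    refine Finset.sum_congr rfl (fun σ _ => ?_)
    congr 1
    rw [← Finset.mul_prod_erase Finset.univ _ (Finset.mem_univ c)]
    have h1 : (Matrix.of fun r j : Fin (m+1) =>
        if j = c then iteratedDeriv (j.1+1) (g r) x else iteratedDeriv j.1 (g r) x)
        (σ c) c = iteratedDeriv (c.1+1) (g (σ c)) x := by simp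
    rw [h1]
    have h2 : ∀ j ∈ Finset.univ.erase c,
        (Matrix.of fun r j : Fin (m+1) =>
          if j = c then iteratedDeriv (j.1+1) (g r) x else iteratedDeriv j.1 (g r) x)
          (σ j) j = iteratedDeriv j.1 (g (σ j)) x := by
      intro j hj
      have : j ≠ c := (Finset.mem_erase.mp hj).1
      simp [this]
    rw [Finset.prod_congr rfl h2]
    simp only [smul_eq_mul]
    ring
  have step3 : Matrix.det (Matrix.of fun i j : Fin (m+1) =>
      iteratedDeriv (if j.1 < m then j.1 else m+1) (g i) x) = D (Fin.last m) := by
    rw [hD]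
    congr 1
    ext r j
    by_cases h : j = Fin.last m
    · have : ¬ (j.1 < m) := by rw [h]; simp
      simp [h, this, Fin.val_last]
    · have hj : j.1 < m := by
        have := j.is_lt
        have : j.1 ≠ m := fun hc => h (Fin.ext (by simp [hc]))
        omega
      simp [h, hj]
  have step4 : ∑ c, D c = D (Fin.last m) := by
    refine Finset.sum_eq_single (Fin.last m) (fun c _ hc => ?_) (by simp)
    -- D c = 0 for c ≠ last
    have hcm : c.1 < m := by
      have := c.is_lt
      have : c.1 ≠ m := fun hhc => hc (Fin.ext (by simp [hhc]))
      omega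
    set c' : Fin (m+1) := ⟨c.1+1, by omega⟩ with hc'
    have hne : c ≠ c' := by
      intro hcc
      have := congrArg Fin.val hcc
      simp [hc'] at this
    rw [hD]
    refine Matrix.det_zero_of_column_eq hne (fun r => ?_)
    have h1 : c' ≠ c := fun hcc => hne hcc.symm
    simp [h1, hc', Fin.ext_iff]
  rw [step3, ← step4]
  simp only [Finset.smul_sum]
  rw [Finset.sum_comm]
  exact Finset.sum_congr rfl (fun c _ => step2 c)


lemma polyEval_contDiff (p : Polynomial ℝ) : ContDiff ℝ (⊤ : ℕ∞) (fun x => p.eval x) := by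
  induction p using Polynomial.induction_on' with
  | add p q hp hq => simpa [Polynomial.eval_add] using hp.add hq
  | monomial n a =>
      simpa [Polynomial.eval_monomial] using (contDiff_const (c := a)).mul (contDiff_id.pow n)

lemma H_contDiff (n : ℤ) : ContDiff ℝ (⊤ : ℕ∞) (H n) := polyEval_contDiff _

lemma snoc_eval {n : ℕ} (f : Fin n → ℝ → ℝ) (a : ℝ → ℝ) (i : Fin (n+1)) :
    Fin.snoc (α := fun _ => ℝ → ℝ) f a i = if h : (i:ℕ) < n then f ⟨i.1, h⟩ else a := by
  refine Fin.lastCases ?_ ?_ i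
  · rw [Fin.snoc_last, dif_neg (by simp)]
  · intro j
    have hj : ((j.castSucc : Fin (n+1)) : ℕ) < n := by simp
    rw [Fin.snoc_castSucc, dif_pos hj]
    congr 1

lemma coe_succAbove {n : ℕ} (p : Fin (n+1)) (i : Fin n) :
    ((p.succAbove i : Fin (n+1)) : ℕ) = if (i:ℕ) < (p:ℕ) then (i:ℕ) else (i:ℕ)+1 := by
  by_cases h : Fin.castSucc i < p
  · have h2 : (i:ℕ) < (p:ℕ) := by simpa [Fin.lt_def] using h
    rw [Fin.succAbove_of_castSucc_lt _ _ h, if_pos h2]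
    simp
  · have h2 : ¬ (i:ℕ) < (p:ℕ) := by simpa [Fin.lt_def] using h
    rw [Fin.succAbove_of_le_castSucc _ _ (not_lt.mp h), if_neg h2]
    simp

lemma key (k : ℕ → ℕ) (y : ℝ → ℝ) (hy : ContDiff ℝ (⊤ : ℕ∞) y) (m : ℕ) (x : ℝ) :
    deriv (Aop k m y) x * eta k (m+1) x - Aop k m y x * deriv (eta k (m+1)) x
      = Aop k (m+1) y x * eta k m x := by
  classical
  set E : Fin (m+1) → ℝ → ℝ := fun i : Fin (m+1) => H (k (i.1 + 1) : ℤ) with hE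
  set Em : Fin m → ℝ → ℝ := fun i : Fin m => H (k (i.1 + 1) : ℤ) with hEm
  set G : Fin (m+2) → ℝ → ℝ := Fin.snoc E y with hG
  set Gm : Fin (m+1) → ℝ → ℝ := Fin.snoc Em y with hGm
  set M : Matrix (Fin (m+2)) (Fin (m+2)) ℝ :=
    Matrix.of (fun i j : Fin (m+2) => iteratedDeriv j.1 (G i) x) with hM
  -- evaluation of G along the two row selections
  have hGrowA : ∀ i : Fin (m+1), G ((rA m).succAbove i) = Gm i := by
    intro i
    have hcA : ((rA m : Fin (m+2)) : ℕ) = m := by simp [rA]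
    have hv : (((rA m).succAbove i : Fin (m+2)) : ℕ) = if (i:ℕ) < m then (i:ℕ) else (i:ℕ)+1 := by
      rw [coe_succAbove, hcA]
    rw [hG, hGm, snoc_eval, snoc_eval]
    by_cases h : (i:ℕ) < m
    · have h1 : (((rA m).succAbove i : Fin (m+2)) : ℕ) < m + 1 := by
        rw [hv]; split_ifs <;> omega
      rw [dif_pos h1, dif_pos h]
      simp only [hE, hEm]
      congr 1
      rw [hv]; simp [h]
    · have him : (i:ℕ) = m := by have := i.is_lt; omega
      have h1 : ¬ (((rA m).succAbove i : Fin (m+2)) : ℕ) < m + 1 := by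
        rw [hv]; split_ifs <;> omega
      rw [dif_neg h1, dif_neg h]
  have hGrowB : ∀ i : Fin (m+1), G ((rB m).succAbove i) = E i := by
    intro i
    have h1 : (rB m).succAbove i = Fin.castSucc i := by
      rw [rB, Fin.succAbove_last]
    rw [h1, hG, Fin.snoc_castSucc]
  have hGemb : ∀ i : Fin m, G (emb m i) = Em i := by
    intro i
    have h1 : ((emb m i : Fin (m+2)) : ℕ) < m + 1 := by
      simp only [emb, Fin.coe_castSucc]
      omega
    rw [hG, snoc_eval, dif_pos h1]
    simp only [hE, hEm]
    congr 1
  -- column coercions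
  have hcolA : ∀ j : Fin (m+1), (((rA m).succAbove j : Fin (m+2)) : ℕ)
      = if j.1 < m then j.1 else m+1 := by
    intro j
    have hcA : ((rA m : Fin (m+2)) : ℕ) = m := by simp [rA]
    rw [coe_succAbove, hcA]
    by_cases h : (j:ℕ) < m
    · simp [h]
    · have : (j:ℕ) = m := by have := j.is_lt; omega
      simp [h, this]
  have hcolB : ∀ j : Fin (m+1), (((rB m).succAbove j : Fin (m+2)) : ℕ) = j.1 := by
    intro j
    rw [rB, Fin.succAbove_last]
    simp
  have hcolemb : ∀ j : Fin m, ((emb m j : Fin (m+2)) : ℕ) = j.1 := by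
    intro j; simp [emb]
  -- the six determinants
  have hMdet : M.det = Aop k (m+1) y x := rfl
  have hcentral : (M.submatrix (emb m) (emb m)).det = eta k m x := by
    show _ = (Matrix.of fun i j : Fin m => iteratedDeriv (j : ℕ) (Em i) x).det
    congr 1
    ext i j
    simp only [Matrix.submatrix_apply, hM, Matrix.of_apply]
    rw [hGemb, hcolemb]
  have hSbb : (M.submatrix ((rB m).succAbove) ((rB m).succAbove)).det = eta k (m+1) x := by
    show _ = (Matrix.of fun i j : Fin (m+1) => iteratedDeriv (j : ℕ) (E i) x).det
    congr 1
    ext i j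
    simp only [Matrix.submatrix_apply, hM, Matrix.of_apply]
    rw [hGrowB, hcolB]
  have hSab : (M.submatrix ((rA m).succAbove) ((rB m).succAbove)).det = Aop k m y x := by
    show _ = (Matrix.of fun i j : Fin (m+1) => iteratedDeriv (j : ℕ) (Gm i) x).det
    congr 1
    ext i j
    simp only [Matrix.submatrix_apply, hM, Matrix.of_apply]
    rw [hGrowA, hcolB]
  have hSba : (M.submatrix ((rB m).succAbove) ((rA m).succAbove)).det
      = deriv (eta k (m+1)) x := by
    have hd := (wr_hasDerivAt m E (fun i => H_contDiff _) x).deriv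
    show _ = deriv (Wr E) x
    rw [hd]
    congr 1
    ext i j
    simp only [Matrix.submatrix_apply, hM, Matrix.of_apply]
    rw [hGrowB, hcolA]
  have hSaa : (M.submatrix ((rA m).succAbove) ((rA m).succAbove)).det
      = deriv (Aop k m y) x := by
    have hGmsm : ∀ i : Fin (m+1), ContDiff ℝ (⊤ : ℕ∞) (Gm i) := by
      intro i
      refine Fin.lastCases ?_ ?_ i
      · rw [hGm]; simpa [Fin.snoc_last] using hy
      · intro j; rw [hGm]; simpa [Fin.snoc_castSucc] using H_contDiff (k (j.1+1) : ℤ)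
    have hd := (wr_hasDerivAt m Gm hGmsm x).deriv
    show _ = deriv (Wr Gm) x
    rw [hd]
    congr 1
    ext i j
    simp only [Matrix.submatrix_apply, hM, Matrix.of_apply]
    rw [hGrowA, hcolA]
  have hdj := dodgson m M
  rw [hMdet, hcentral, hSbb, hSab, hSba, hSaa] at hdj
  exact hdj


end WrFact

/-- Proposition 3.1 (A-part): the order-`l` operator `A` factors as
`A = A_l ∘ ⋯ ∘ A_2 ∘ A_1`. -/
theorem stmt_1 (l : ℕ) (hl : 1 ≤ l) (k : ℕ → ℕ) (hk1 : 1 ≤ k 1)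
    (hmono : ∀ i, 1 ≤ i → i < l → k i < k (i + 1))
    (y : ℝ → ℝ) (hy : ContDiff ℝ (⊤ : ℕ∞) y) (x : ℝ)
    (hx : ∀ j, 1 ≤ j → j ≤ l - 1 → eta k j x ≠ 0) :
    Aiter k l y x = Aop k l y x := by
  classical
  have heta0 : ∀ z : ℝ, eta k 0 z = 1 := by
    intro z
    unfold eta Wr
    exact Matrix.det_fin_zero
  have hAop0 : ∀ z : ℝ, Aop k 0 y z = y z := by
    intro z
    unfold Aop Wr
    rw [Matrix.det_fin_one]
    simp [Fin.snoc]
  have hetaCont : ∀ j : ℕ, Continuous (eta k j) := by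
    intro j
    cases j with
    | zero =>
      have : eta k 0 = fun _ => (1:ℝ) := funext heta0
      rw [this]; exact continuous_const
    | succ j =>
      have hdiff : Differentiable ℝ (Wr (fun i : Fin (j+1) => H (k (i.1 + 1) : ℤ))) :=
        fun z => (WrFact.wr_hasDerivAt j _ (fun i => WrFact.H_contDiff _) z).differentiableAt
      exact hdiff.continuous
  set U : Set ℝ := ⋂ j ∈ Finset.Icc 1 (l-1), {z : ℝ | eta k j z ≠ 0} with hU
  have hUopen : IsOpen U := by
    rw [hU]
    exact isOpen_biInter_finset
      (fun j _ => (isOpen_compl_singleton).preimage (hetaCont j))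
  have hxU : x ∈ U := by
    rw [hU]
    simp only [Set.mem_iInter, Set.mem_setOf_eq, Finset.mem_Icc]
    exact fun j hj => hx j hj.1 hj.2
  have hUne : ∀ j, 1 ≤ j → j ≤ l - 1 → ∀ z ∈ U, eta k j z ≠ 0 := by
    intro j h1 h2 z hz
    rw [hU] at hz
    simp only [Set.mem_iInter, Set.mem_setOf_eq, Finset.mem_Icc] at hz
    exact hz j ⟨h1, h2⟩
  have main : ∀ j, j ≤ l → ∀ z ∈ U, Aiter k j y z = Aop k j y z := by
    intro j
    induction j with
    | zero =>
      intro _ z _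
      show y z = Aop k 0 y z
      rw [hAop0]
    | succ j ih =>
      intro hjl z hz
      have hIH : ∀ w ∈ U, Aiter k j y w = Aop k j y w := ih (by omega)
      have hev : Aiter k j y =ᶠ[nhds z] Aop k j y :=
        Filter.eventuallyEq_of_mem (hUopen.mem_nhds hz) hIH
      have hderiv : deriv (Aiter k j y) z = deriv (Aop k j y) z := hev.deriv_eq
      have hval : Aiter k j y z = Aop k j y z := hIH z hz
      have hne : eta k j z ≠ 0 := by
        rcases Nat.eq_zero_or_pos j with h0 | h1
        · rw [h0, heta0]; exact one_ne_zero
        · exact hUne j h1 (by omega) z hz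
      have hkey := WrFact.key k y hy j z
      show Astep k (j+1) (Aiter k j y) z = Aop k (j+1) y z
      unfold Astep
      simp only [Nat.add_sub_cancel]
      rw [hderiv, hval]
      have hnum : eta k (j+1) z * deriv (Aop k j y) z - deriv (eta k (j+1)) z * Aop k j y z
          = Aop k (j+1) y z * eta k j z := by linear_combination hkey
      rw [hnum]
      exact mul_div_cancel_right₀ _ hne
  exact main l le_rfl x hxU

end
end

section
/- If f ∈ ℝ[x] and the derivative f′ is divisible by η in ℝ[x], then f belongs to the stabilizer ring of U; that is, for every p ∈ U the product f·p again lies in U. -/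
noncomputable section

/-- `N = (Σ_{i=1}^l k_i) - l(l-1)/2`. -/
def Nval (k : ℕ → ℕ) (l : ℕ) : ℤ :=
  (∑ i ∈ Finset.range l, (k (i + 1) : ℤ)) - (l * (l - 1) / 2 : ℕ)

/-- The Wronskian of a finite family of polynomials. -/
def WrP {m : ℕ} (f : Fin m → Polynomial ℝ) : Polynomial ℝ :=
  Matrix.det (Matrix.of fun i j : Fin m => (Polynomial.derivative)^[j.1] (f i))

/-- `η = Wr[H_{k 1}, …, H_{k l}]` as a polynomial. -/
def etaP (k : ℕ → ℕ) (l : ℕ) : Polynomial ℝ :=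
  WrP (fun i : Fin l => Herm (k (i.1 + 1) : ℤ))

/-- The exceptional Hermite polynomial `ĥ(n) = Wr[H_{k 1},…,H_{k l}, H_{n+l-N}]`
as a polynomial. -/
def hhatP (k : ℕ → ℕ) (l : ℕ) (n : ℤ) : Polynomial ℝ :=
  WrP (Fin.snoc (fun i : Fin l => Herm (k (i.1 + 1) : ℤ)) (Herm (n + l - Nval k l)))

/-- The degree set `I = {n : N - l ≤ n, n + l - N ∉ {k_1,…,k_l}}`. -/
def Iset (k : ℕ → ℕ) (l : ℕ) : Set ℤ :=
  {n | Nval k l - l ≤ n ∧ ∀ i, 1 ≤ i → i ≤ l → n + l - Nval k l ≠ (k i : ℤ)}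

/-- `U`: the linear span of the exceptional Hermite polynomials. -/
def Uspan (k : ℕ → ℕ) (l : ℕ) : Submodule ℝ (Polynomial ℝ) :=
  Submodule.span ℝ ((fun n => hhatP k l n) '' Iset k l)

/-!
Write `S_m(b) = Wr[F_0, …, F_{m-1}, b]` and `W_m = Wr[F_0, …, F_{m-1}]` for `F_t = H_{k_{t+1}}`.
Since the Hermite polynomials span `ℝ[X]` and `S_l` kills `F_0, …, F_{l-1}`, `U` is the image of
`S_l`. Given `f' = W_l q` and `g`, variation of constants suggests `h = f g - ∑_j R_j F_j` with
`R_j' = q · Wr[F_0, …, g, …, F_{l-1}]` (`g` in slot `j`); by Cramer's rule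
`∑_j R_j' S_m(F_j) = f' S_m(g)` for `m < l`. Together with the Jacobi identity
`W_m S_{m+1}(b) = W_{m+1} S_m(b)' - W_{m+1}' S_m(b)` this shows that
`P_m = f S_m(g) - ∑_j R_j S_m(F_j)` obeys the recursion of `S_m(h)`, so `S_l(h) = P_l = f S_l(g)`.
The Jacobi identity holds because its defect is a differential operator of order `≤ m` that
annihilates `F_0, …, F_m`, whose Wronskian is nonzero as the `F_t` have distinct degrees `d_t`:
its coefficient of `X ^ (∑ d_t - ∑ t)` is a nonzero multiple of a Vandermonde determinant.
-/

open Polynomial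
open scoped Matrix

lemma Polynomial.exists_derivative_eq {K : Type*} [Field K] [CharZero K] (p : K[X]) :
    ∃ q, derivative q = p := by
  induction p using Polynomial.induction_on' with
  | add p q hp hq =>
    obtain ⟨a, rfl⟩ := hp
    obtain ⟨b, rfl⟩ := hq
    exact ⟨a + b, derivative_add⟩
  | monomial n c =>
    refine ⟨monomial (n + 1) (c / (n + 1)), ?_⟩
    rw [derivative_monomial]
    congr 1
    push_cast
    field_simp

lemma Polynomial.coeff_prod_sum_of_natDegree_le {R ι : Type*} [CommSemiring R] (s : Finset ι)
    (f : ι → R[X]) (e : ι → ℕ) (h : ∀ i ∈ s, (f i).natDegree ≤ e i) :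
    (∏ i ∈ s, f i).coeff (∑ i ∈ s, e i) = ∏ i ∈ s, (f i).coeff (e i) := by
  classical
  induction s using Finset.induction_on with
  | empty => simp
  | insert a s ha ih =>
    have hs : ∀ i ∈ s, (f i).natDegree ≤ e i := fun i hi => h i (Finset.mem_insert_of_mem hi)
    rw [Finset.prod_insert ha, Finset.sum_insert ha, Finset.prod_insert ha,
      coeff_mul_add_eq_of_natDegree_le (h a (Finset.mem_insert_self a s))
        ((natDegree_prod_le _ _).trans (Finset.sum_le_sum hs)), ih hs]

lemma Polynomial.coeff_prod_iterate_derivative {R : Type*} [CommRing R] {m : ℕ}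
    (g : Fin m → R[X]) :
    (∏ i : Fin m, derivative^[i] (g i)).coeff (∑ i, (g i).natDegree - ∑ i : Fin m, (i : ℕ)) =
      ∏ i, (g i).natDegree.descFactorial i • (g i).leadingCoeff := by
  by_cases hle : ∀ i : Fin m, (i : ℕ) ≤ (g i).natDegree
  · rw [← Finset.sum_tsub_distrib _ fun i _ => hle i, coeff_prod_sum_of_natDegree_le _ _ _
      fun i _ => natDegree_iterate_derivative _ _]
    refine Finset.prod_congr rfl fun i _ => ?_
    rw [coeff_iterate_derivative, Nat.sub_add_cancel (hle i), coeff_natDegree]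
  · push Not at hle
    obtain ⟨i, hi⟩ := hle
    have hD : ∏ i : Fin m, derivative^[i] (g i) = 0 :=
      Finset.prod_eq_zero (Finset.mem_univ i) (iterate_derivative_eq_zero hi)
    have hF : ∏ i, (g i).natDegree.descFactorial i • (g i).leadingCoeff = 0 :=
      Finset.prod_eq_zero (Finset.mem_univ i) (by simp [Nat.descFactorial_eq_zero_iff_lt.mpr hi])
    rw [hD, hF, coeff_zero]

namespace ExceptionalHermite

section Wronskian

variable {m : ℕ}

def jetMatrix (f : Fin m → ℝ[X]) : Matrix (Fin m) (Fin m) ℝ[X] :=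
  Matrix.of fun i j => derivative^[j] (f i)

lemma WrP_eq_det_jetMatrix (f : Fin m → ℝ[X]) : WrP f = (jetMatrix f).det := rfl

lemma jetMatrix_update (f : Fin m → ℝ[X]) (j : Fin m) (b : ℝ[X]) :
    jetMatrix (Function.update f j b) =
      (jetMatrix f).updateRow j fun c => derivative^[c] b := by
  ext i c
  by_cases hij : i = j
  · subst hij; simp [jetMatrix]
  · simp [jetMatrix, Function.update_of_ne hij, Matrix.updateRow_ne hij]

lemma WrP_eq_zero_of_apply_eq {f : Fin m → ℝ[X]} {i j : Fin m} (hij : i ≠ j) (h : f i = f j) :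
    WrP f = 0 :=
  Matrix.det_zero_of_row_eq hij (by ext c; simp [h])

def wrUpdate (f : Fin m → ℝ[X]) (j : Fin m) : ℝ[X] →ₗ[ℝ] ℝ[X] where
  toFun b := WrP (Function.update f j b)
  map_add' a b := by
    simp only [WrP_eq_det_jetMatrix, jetMatrix_update, iterate_map_add]
    exact Matrix.det_updateRow_add _ _ _ _
  map_smul' r b := by
    simp only [WrP_eq_det_jetMatrix, jetMatrix_update, RingHom.id_apply, smul_eq_C_mul,
      iterate_derivative_C_mul, ← Matrix.det_updateRow_smul]
    rfl

lemma wrUpdate_apply (f : Fin m → ℝ[X]) (j : Fin m) (b : ℝ[X]) :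
    wrUpdate f j b = WrP (Function.update f j b) := rfl

lemma wrUpdate_eq_sum (f : Fin m → ℝ[X]) (j : Fin m) (b : ℝ[X]) :
    wrUpdate f j b = ∑ c, (jetMatrix f)ᵀ.adjugate j c * derivative^[c] b := by
  rw [wrUpdate_apply, WrP_eq_det_jetMatrix, jetMatrix_update,
    ← Matrix.cramer_transpose_apply, Matrix.cramer_eq_adjugate_mulVec]
  rfl

/-- Cramer's rule for the jet matrix. -/
lemma sum_wrUpdate_mul_iterate_derivative (f : Fin m → ℝ[X]) (b : ℝ[X]) (c : Fin m) :
    ∑ j, wrUpdate f j b * derivative^[c] (f j) = WrP f * derivative^[c] b := by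
  have h := congrFun (Matrix.mulVec_cramer (jetMatrix f)ᵀ fun c => derivative^[c] b) c
  simp only [Matrix.mulVec, dotProduct, Matrix.det_transpose, Pi.smul_apply, smul_eq_mul,
    Matrix.cramer_transpose_apply, Matrix.transpose_apply] at h
  simp only [wrUpdate_apply, WrP_eq_det_jetMatrix, jetMatrix_update]
  rw [← h]
  exact Finset.sum_congr rfl fun j _ => mul_comm _ _

/-- Linear differential operators of order `< n` with polynomial coefficients. -/
def diffOps (n : ℕ) : Submodule ℝ[X] (ℝ[X] → ℝ[X]) :=
  Submodule.span ℝ[X] (Set.range fun c : Fin n => (⇑derivative)^[c])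

lemma iterate_derivative_mem_diffOps {c n : ℕ} (hc : c < n) :
    (⇑derivative)^[c] ∈ diffOps n :=
  Submodule.subset_span ⟨⟨c, hc⟩, rfl⟩

lemma diffOps_mono {n n' : ℕ} (h : n ≤ n') : diffOps n ≤ diffOps n' :=
  Submodule.span_le.mpr <| by
    rintro _ ⟨c, rfl⟩
    exact iterate_derivative_mem_diffOps (c.2.trans_le h)

lemma exists_eq_sum_of_mem_diffOps {n : ℕ} {T : ℝ[X] → ℝ[X]} (hT : T ∈ diffOps n) :
    ∃ a : Fin n → ℝ[X], ∀ b, T b = ∑ c, a c * derivative^[c] b := by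
  obtain ⟨a, rfl⟩ := (Submodule.mem_span_range_iff_exists_fun ℝ[X]).mp hT
  exact ⟨a, fun b => by simp⟩

lemma sum_mem_diffOps {n : ℕ} (a : Fin n → ℝ[X]) :
    (fun b => ∑ c, a c * derivative^[c] b) ∈ diffOps n := by
  refine (Submodule.mem_span_range_iff_exists_fun ℝ[X]).mpr ⟨a, ?_⟩
  funext b
  simp

lemma derivative_comp_mem_diffOps {n : ℕ} {T : ℝ[X] → ℝ[X]} (hT : T ∈ diffOps n) :
    ⇑derivative ∘ T ∈ diffOps (n + 1) := by
  induction hT using Submodule.span_induction with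
  | mem T hT =>
    obtain ⟨c, rfl⟩ := hT
    rw [← Function.iterate_succ']
    exact iterate_derivative_mem_diffOps (Nat.succ_lt_succ c.2)
  | zero =>
    convert (diffOps (n + 1)).zero_mem using 1
    funext b
    simp
  | add T T' _ _ hT hT' =>
    convert add_mem hT hT' using 1
    funext b
    simp
  | smul p T hT₀ hT =>
    convert add_mem (Submodule.smul_mem _ (derivative p) (diffOps_mono n.le_succ hT₀))
      (Submodule.smul_mem _ p hT) using 1
    funext b
    simp [derivative_mul]

lemma eq_zero_of_mem_diffOps {T : ℝ[X] → ℝ[X]} (hT : T ∈ diffOps m) {f : Fin m → ℝ[X]}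
    (hW : WrP f ≠ 0) (hf : ∀ i, T (f i) = 0) : T = 0 := by
  obtain ⟨a, ha⟩ := exists_eq_sum_of_mem_diffOps hT
  have ha0 : a = 0 := by
    refine Matrix.eq_zero_of_mulVec_eq_zero hW (funext fun i => ?_)
    simpa [Matrix.mulVec, dotProduct, jetMatrix, ha, mul_comm] using hf i
  ext b : 1
  simp [ha, ha0]

lemma sum_wrUpdate_mul_apply {f : Fin m → ℝ[X]} {T : ℝ[X] → ℝ[X]} (hT : T ∈ diffOps m)
    (b : ℝ[X]) : ∑ j, wrUpdate f j b * T (f j) = WrP f * T b := by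
  obtain ⟨a, ha⟩ := exists_eq_sum_of_mem_diffOps hT
  simp only [ha, Finset.mul_sum]
  rw [Finset.sum_comm]
  refine Finset.sum_congr rfl fun c _ => ?_
  simp only [mul_left_comm _ (a c), ← Finset.mul_sum, sum_wrUpdate_mul_iterate_derivative]

lemma det_descFactorial_ne_zero {d : Fin m → ℕ} (hd : Function.Injective d) :
    (Matrix.of fun i j : Fin m => ((d i).descFactorial j : ℝ)).det ≠ 0 := by
  have h := Matrix.det_eval_matrixOfPolynomials_eq_det_vandermonde (fun i => (d i : ℝ))
    (fun j : Fin m => descPochhammer ℝ j) (fun j => descPochhammer_natDegree (R := ℝ) j)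
    (fun j => monic_descPochhammer (R := ℝ) j)
  simp only [descPochhammer_eval_eq_descFactorial] at h
  rw [← h, Matrix.det_vandermonde_ne_zero_iff]
  exact Nat.cast_injective.comp hd

theorem WrP_ne_zero {f : Fin m → ℝ[X]} (hf : ∀ i, f i ≠ 0)
    (hd : Function.Injective fun i => (f i).natDegree) : WrP f ≠ 0 := by
  have hcoeff : (WrP f).coeff (∑ i, (f i).natDegree - ∑ i : Fin m, (i : ℕ)) =
      (∏ i, (f i).leadingCoeff) *
        (Matrix.of fun i j : Fin m => ((f i).natDegree.descFactorial j : ℝ)).det := by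
    rw [WrP_eq_det_jetMatrix, Matrix.det_apply', finsetSum_coeff, Matrix.det_apply',
      Finset.mul_sum]
    refine Finset.sum_congr rfl fun σ _ => ?_
    have h := coeff_prod_iterate_derivative (f ∘ σ)
    simp only [Function.comp_apply, Equiv.sum_comp σ fun i => (f i).natDegree] at h
    rw [← C_eq_intCast, coeff_C_mul]
    simp only [jetMatrix, Matrix.of_apply, h, nsmul_eq_mul, Finset.prod_mul_distrib,
      Equiv.prod_comp σ fun i => (f i).leadingCoeff]
    ring
  intro h0
  rw [h0, coeff_zero] at hcoeff
  exact mul_ne_zero (Finset.prod_ne_zero_iff.mpr fun i _ => leadingCoeff_ne_zero.mpr (hf i))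
    (det_descFactorial_ne_zero hd) hcoeff.symm

end Wronskian

section Prefix

variable {G : ℕ → ℝ[X]} {m : ℕ}

def wr (G : ℕ → ℝ[X]) (m : ℕ) : ℝ[X] := WrP fun i : Fin m => G i

def wrAppend (G : ℕ → ℝ[X]) (m : ℕ) : ℝ[X] →ₗ[ℝ] ℝ[X] :=
  wrUpdate (Fin.snoc (fun i : Fin m => G i) 0) (Fin.last m)

lemma wrAppend_apply (b : ℝ[X]) :
    wrAppend G m b = WrP (Fin.snoc (fun i : Fin m => G i) b) := by
  rw [wrAppend, wrUpdate_apply, Fin.update_snoc_last]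

lemma wrAppend_zero (b : ℝ[X]) : wrAppend G 0 b = b := by
  rw [wrAppend_apply, WrP, Matrix.det_fin_one]
  rfl

lemma wrAppend_self : wrAppend G m (G m) = wr G (m + 1) := by
  rw [wrAppend_apply, wr]
  congr 1
  funext i
  induction i using Fin.lastCases <;> simp

lemma wrAppend_apply_of_lt {r : ℕ} (hr : r < m) : wrAppend G m (G r) = 0 := by
  rw [wrAppend_apply]
  exact WrP_eq_zero_of_apply_eq (Fin.castSucc_ne_last ⟨r, hr⟩)
    (by simp only [Fin.snoc_castSucc, Fin.snoc_last])

lemma wrAppend_sub_mem_diffOps : ⇑(wrAppend G m) - wr G m • (⇑derivative)^[m] ∈ diffOps m := by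
  set a := (jetMatrix (Fin.snoc (fun i : Fin m => G i) (0 : ℝ[X])))ᵀ.adjugate (Fin.last m)
  have ha : a (Fin.last m) = wr G m := by
    simp only [a, Matrix.adjugate_fin_succ_eq_det_submatrix, Fin.succAbove_last]
    rw [Fin.val_last, ← two_mul, pow_mul, neg_one_sq, one_pow, one_mul,
      ← Matrix.transpose_submatrix, Matrix.det_transpose]
    congr 1
    ext i j
    simp [jetMatrix]
  convert sum_mem_diffOps fun c : Fin m => a c.castSucc using 1
  funext b
  simp [wrAppend, wrUpdate_eq_sum, Fin.sum_univ_castSucc, ha, a]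

lemma wrAppend_mem_diffOps : ⇑(wrAppend G m) ∈ diffOps (m + 1) := by
  simpa using add_mem (diffOps_mono m.le_succ (wrAppend_sub_mem_diffOps (G := G)))
    (Submodule.smul_mem _ (wr G m) (iterate_derivative_mem_diffOps m.lt_succ_self))

/-- The Jacobi (Crum) identity for Wronskians. -/
theorem wr_mul_wrAppend_succ (hW : wr G (m + 1) ≠ 0) (b : ℝ[X]) :
    wr G m * wrAppend G (m + 1) b =
      wr G (m + 1) * derivative (wrAppend G m b) - derivative (wr G (m + 1)) * wrAppend G m b := by
  set E : ℝ[X] → ℝ[X] := fun b => wr G m * wrAppend G (m + 1) b -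
    (wr G (m + 1) * derivative (wrAppend G m b) - derivative (wr G (m + 1)) * wrAppend G m b)
  -- the `b^{(m+1)}`-terms cancel, so `E` has order `≤ m`
  have hE : E ∈ diffOps (m + 1) := by
    have h := add_mem (sub_mem (sub_mem
      (Submodule.smul_mem _ (wr G m) (wrAppend_sub_mem_diffOps (G := G) (m := m + 1)))
      (Submodule.smul_mem _ (wr G (m + 1))
        (derivative_comp_mem_diffOps (wrAppend_sub_mem_diffOps (G := G) (m := m)))))
      (Submodule.smul_mem _ (wr G (m + 1) * derivative (wr G m))
        (iterate_derivative_mem_diffOps m.lt_succ_self)))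
      (Submodule.smul_mem _ (derivative (wr G (m + 1))) (wrAppend_mem_diffOps (G := G) (m := m)))
    convert h using 1
    funext b
    simp only [E, Pi.add_apply, Pi.sub_apply, Pi.smul_apply, smul_eq_mul, Function.comp_apply,
      derivative_sub, derivative_mul, Function.iterate_succ_apply']
    ring
  have hEG : ∀ i : Fin (m + 1), E (G i) = 0 := by
    intro i
    induction i using Fin.lastCases with
    | last =>
      simp only [E, Fin.val_last, wrAppend_apply_of_lt m.lt_succ_self, wrAppend_self]
      ring
    | cast i =>
      simp only [E, Fin.val_castSucc, wrAppend_apply_of_lt i.2,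
        wrAppend_apply_of_lt (i.2.trans m.lt_succ_self), derivative_zero]
      ring
  exact sub_eq_zero.mp (congrFun (eq_zero_of_mem_diffOps hE hW hEG) b)

theorem wrAppend_eq_of_recursion {n : ℕ} (hW : ∀ m ≤ n, wr G m ≠ 0) (P : ℕ → ℝ[X])
    (hP : ∀ m < n, wr G m * P (m + 1) =
      wr G (m + 1) * derivative (P m) - derivative (wr G (m + 1)) * P m) :
    ∀ i ≤ n, wrAppend G i (P 0) = P i := by
  intro i hi
  induction i with
  | zero => exact wrAppend_zero _
  | succ m ih =>
    refine mul_left_cancel₀ (hW m (by omega)) ?_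
    rw [wr_mul_wrAppend_succ (hW (m + 1) hi), ih (by omega), hP m hi]

theorem exists_wrAppend_eq_mul {l : ℕ} (hW : ∀ m ≤ l, wr G m ≠ 0) {f : ℝ[X]}
    (hf : wr G l ∣ derivative f) (g : ℝ[X]) : ∃ h, wrAppend G l h = f * wrAppend G l g := by
  obtain ⟨q, hq⟩ := hf
  choose R hR using fun j : Fin l => exists_derivative_eq (q * wrUpdate (fun i : Fin l => G i) j g)
  set P : ℕ → ℝ[X] := fun i => f * wrAppend G i g - ∑ j, R j * wrAppend G i (G j)
  have hP : ∀ m < l, wr G m * P (m + 1) =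
      wr G (m + 1) * derivative (P m) - derivative (wr G (m + 1)) * P m := by
    intro m hm
    have hJ := wr_mul_wrAppend_succ (hW (m + 1) hm)
    have hcramer : ∑ j, derivative (R j) * wrAppend G m (G j) =
        derivative f * wrAppend G m g := by
      simp only [hR, mul_assoc, ← Finset.mul_sum]
      rw [sum_wrUpdate_mul_apply (diffOps_mono hm wrAppend_mem_diffOps), hq, wr]
      ring
    have hsum : wr G m * ∑ j, R j * wrAppend G (m + 1) (G j) =
        wr G (m + 1) * ∑ j, R j * derivative (wrAppend G m (G j)) -
          derivative (wr G (m + 1)) * ∑ j, R j * wrAppend G m (G j) := by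
      simp only [Finset.mul_sum, ← Finset.sum_sub_distrib]
      exact Finset.sum_congr rfl fun j _ => by linear_combination R j * hJ (G j)
    simp only [P, derivative_sub, derivative_mul, derivative_sum, Finset.sum_add_distrib]
    linear_combination f * hJ g - hsum + wr G (m + 1) * hcramer
  refine ⟨P 0, (wrAppend_eq_of_recursion hW P hP l le_rfl).trans ?_⟩
  simp [P, wrAppend_apply_of_lt]

end Prefix

lemma hermN_natDegree_and_leadingCoeff :
    ∀ n, (hermN n).natDegree = n ∧ (hermN n).leadingCoeff = 2 ^ n
  | 0 => by simp [hermN]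
  | 1 => by simp [hermN]
  | n + 2 => by
    obtain ⟨hd₁, hc₁⟩ := hermN_natDegree_and_leadingCoeff (n + 1)
    obtain ⟨hd₀, -⟩ := hermN_natDegree_and_leadingCoeff n
    have hne : hermN (n + 1) ≠ 0 := leadingCoeff_ne_zero.mp (by rw [hc₁]; positivity)
    have hlead : (C 2 * X * hermN (n + 1)).natDegree = n + 2 ∧
        (C 2 * X * hermN (n + 1)).leadingCoeff = 2 ^ (n + 2) := by
      rw [natDegree_mul (by simp) hne, leadingCoeff_mul, hd₁, hc₁]
      constructor
      · rw [natDegree_C_mul_X _ two_ne_zero]; ring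
      · simp only [leadingCoeff_mul, leadingCoeff_C, monic_X, Monic.leadingCoeff, mul_one]
        ring
    have hlow : (C (2 * ((n : ℝ) + 1)) * hermN n).natDegree < n + 2 :=
      (natDegree_C_mul_le _ _).trans_lt (by omega)
    rw [hermN, natDegree_sub_eq_left_of_natDegree_lt (hlead.1 ▸ hlow),
      leadingCoeff_sub_of_degree_lt (degree_lt_degree (hlead.1 ▸ hlow))]
    exact hlead

lemma hermN_ne_zero (n : ℕ) : hermN n ≠ 0 :=
  leadingCoeff_ne_zero.mp (by rw [(hermN_natDegree_and_leadingCoeff n).2]; positivity)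

lemma Herm_natCast (n : ℕ) : Herm n = hermN n := by
  rw [Herm, if_pos (Int.natCast_nonneg n), Int.toNat_natCast]

lemma span_range_hermN : Submodule.span ℝ (Set.range hermN) = ⊤ :=
  Polynomial.Sequence.span (R := ℝ)
    ⟨hermN, fun n => by
      rw [degree_eq_natDegree (hermN_ne_zero n), (hermN_natDegree_and_leadingCoeff n).1]⟩
    fun n => by simp [(hermN_natDegree_and_leadingCoeff n).2]

lemma wr_Herm_ne_zero {d : ℕ → ℕ} {n : ℕ} (hd : StrictMonoOn d (Set.Iio n)) :
    ∀ m ≤ n, wr (fun t => Herm (d t)) m ≠ 0 := by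
  intro m hm
  refine WrP_ne_zero (fun i => by simpa [Herm_natCast] using hermN_ne_zero _) fun i j hij => ?_
  simp only [Herm_natCast, (hermN_natDegree_and_leadingCoeff _).1] at hij
  exact Fin.ext (hd.injOn (Set.mem_Iio.mpr (by omega)) (Set.mem_Iio.mpr (by omega)) hij)

lemma Uspan_eq_range (k : ℕ → ℕ) (l : ℕ) :
    Uspan k l = LinearMap.range (wrAppend (fun t => Herm (k (t + 1))) l) := by
  refine le_antisymm (Submodule.span_le.mpr ?_) ?_
  · rintro _ ⟨n, -, rfl⟩
    exact ⟨_, wrAppend_apply _⟩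
  rw [LinearMap.range_eq_map, ← span_range_hermN, Submodule.map_span, Submodule.span_le]
  rintro _ ⟨_, ⟨n, rfl⟩, rfl⟩
  by_cases hn : ∃ i, 1 ≤ i ∧ i ≤ l ∧ n = k i
  · obtain ⟨i, hi₁, hil, rfl⟩ := hn
    have h := wrAppend_apply_of_lt (G := fun t => Herm (k (t + 1))) (m := l) (r := i - 1)
      (by omega)
    rw [Nat.sub_add_cancel hi₁, Herm_natCast] at h
    rw [SetLike.mem_coe, h]
    exact zero_mem _
  · push Not at hn
    have hI : (n : ℤ) + Nval k l - l ∈ Iset k l :=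
      ⟨by omega, fun i hi₁ hil h => hn i hi₁ hil (by omega)⟩
    have h := Submodule.subset_span (R := ℝ) (Set.mem_image_of_mem (hhatP k l) hI)
    rw [hhatP, show (n : ℤ) + Nval k l - l + l - Nval k l = n by ring, Herm_natCast] at h
    rwa [SetLike.mem_coe, wrAppend_apply]

end ExceptionalHermite

open ExceptionalHermite in
theorem stmt_11_general (l : ℕ) (k : ℕ → ℕ)
    (hmono : ∀ i, 1 ≤ i → i < l → k i < k (i + 1))
    (f : Polynomial ℝ) (hf : etaP k l ∣ Polynomial.derivative f) :
    ∀ p ∈ Uspan k l, f * p ∈ Uspan k l := by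
  have hk : StrictMonoOn (fun t => k (t + 1)) (Set.Iio l) :=
    (strictMonoOn_Iic_of_lt_succ (n := l - 1) fun t ht => hmono (t + 1) (by omega) (by omega)).mono
      fun t ht => by simp only [Set.mem_Iio, Set.mem_Iic] at ht ⊢; omega
  rw [Uspan_eq_range]
  rintro _ ⟨g, rfl⟩
  exact exists_wrAppend_eq_mul (wr_Herm_ne_zero hk) hf g

/-- If `f'` is divisible by `η` then `f` stabilizes `U`. -/
theorem stmt_11 (l : ℕ) (hl : 1 ≤ l) (k : ℕ → ℕ) (hk1 : 1 ≤ k 1)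
    (hmono : ∀ i, 1 ≤ i → i < l → k i < k (i + 1))
    (f : Polynomial ℝ) (hf : etaP k l ∣ Polynomial.derivative f) :
    ∀ p ∈ Uspan k l, f * p ∈ Uspan k l :=
  stmt_11_general l k hmono f hf

end
end

section
/- The linear transformation B is injective on U: if p ∈ U and B(p)(x) = 0 for every x ∈ ℝ with η(x) ≠ 0, then p is the zero polynomial. -/
noncomputable section

/-- `h̃_j`: the Wronskian of `H_{k 1}, …, H_{k l}` with the `j`-th entry omitted. -/
def htil (k : ℕ → ℕ) (l j : ℕ) : ℝ → ℝ :=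
  fun x => Wr (fun i : Fin (l - 1) =>
    H (k (if i.1 + 1 < j then i.1 + 1 else i.1 + 2) : ℤ)) x

/-- The order-`l` operator
`B(y)(x) = (-1)^⌊l/2⌋ e^{x²} η(x)^{-l} Wr[h̃_1, …, h̃_l, e^{-x²} y](x)`. -/
def Bop (k : ℕ → ℕ) (l : ℕ) (y : ℝ → ℝ) : ℝ → ℝ :=
  fun x => (-1 : ℝ) ^ (l / 2) * Real.exp (x ^ 2) / (eta k l x) ^ l *
    Wr (Fin.snoc (fun i : Fin l => htil k l (i.1 + 1))
      (fun t => Real.exp (-t ^ 2) * y t)) x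

/-!
Away from the zeros of `η`, `B(p)(x)` is a nonzero multiple of `W(x)`, the determinant of the
polynomial matrix with rows `(h̃_i^{(j)})_j` and last row `((e^{x²} ∂ e^{-x²})^j p)_j`. Bounding
the degree of row `i` by `deg h̃_i - j` and that of the last row by `deg p + 2ℓ - j`, the
coefficient of `W` at the total bound is `(-2)^ℓ lc(p)` times the top coefficient of
`Wr[h̃_1, …, h̃_ℓ]`. A Wronskian of polynomials with distinct degrees `d_i` has top coefficient
`∏ lc · ∏_{i<j} (d_j - d_i)` (a Vandermonde determinant), and the degrees `deg h̃_i = const - k_i`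
are distinct. Hence `W ≠ 0` when `p ≠ 0`, and `W` and `η` have only finitely many zeros.
-/

open Polynomial Finset Function

section DegreeBounds

variable {R : Type*} [CommRing R]

/-- An integer-indexed degree bound; for `b < 0` it forces `p = 0`, which keeps the bounds
`deg f - j` of iterated derivatives meaningful. -/
def VanishesAbove (p : R[X]) (b : ℤ) : Prop := ∀ n : ℕ, b < n → p.coeff n = 0

namespace VanishesAbove

variable {p q : R[X]} {a b : ℤ}

lemma of_natDegree_le (h : (p.natDegree : ℤ) ≤ b) : VanishesAbove p b :=
  fun _ hn => coeff_eq_zero_of_natDegree_lt (by omega)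

lemma mono (h : VanishesAbove p a) (hab : a ≤ b) : VanishesAbove p b :=
  fun n hn => h n (by omega)

lemma eq_zero (h : VanishesAbove p b) (hb : b < 0) : p = 0 :=
  Polynomial.ext fun n => by rw [h n (by omega), coeff_zero]

lemma natDegree_le (h : VanishesAbove p b) : p.natDegree ≤ b.toNat :=
  natDegree_le_iff_coeff_eq_zero.2 fun n hn => h n (by omega)

lemma mul (hp : VanishesAbove p a) (hq : VanishesAbove q b) : VanishesAbove (p * q) (a + b) := by
  rcases lt_or_ge a 0 with ha | ha
  · simp [hp.eq_zero ha, VanishesAbove]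
  rcases lt_or_ge b 0 with hb | hb
  · simp [hq.eq_zero hb, VanishesAbove]
  have := natDegree_mul_le (p := p) (q := q)
  have := hp.natDegree_le
  have := hq.natDegree_le
  exact of_natDegree_le (by omega)

lemma coeff_mul (hp : VanishesAbove p a) (hq : VanishesAbove q b) :
    (p * q).coeff (a + b).toNat = p.coeff a.toNat * q.coeff b.toNat := by
  rcases lt_or_ge a 0 with ha | ha
  · simp [hp.eq_zero ha]
  rcases lt_or_ge b 0 with hb | hb
  · simp [hq.eq_zero hb]
  rw [show (a + b).toNat = a.toNat + b.toNat by omega]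
  exact coeff_mul_add_eq_of_natDegree_le hp.natDegree_le hq.natDegree_le

variable {ι : Type*} {s : Finset ι} {f : ι → R[X]} {d : ι → ℤ}

lemma prod (h : ∀ i ∈ s, VanishesAbove (f i) (d i)) :
    VanishesAbove (∏ i ∈ s, f i) (∑ i ∈ s, d i) := by
  classical
  induction s using Finset.induction_on with
  | empty => exact of_natDegree_le (by simp)
  | insert a s ha ih =>
    rw [prod_insert ha, sum_insert ha]
    exact (h a (mem_insert_self a s)).mul (ih fun i hi => h i (mem_insert_of_mem hi))

lemma coeff_prod (h : ∀ i ∈ s, VanishesAbove (f i) (d i)) :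
    (∏ i ∈ s, f i).coeff (∑ i ∈ s, d i).toNat = ∏ i ∈ s, (f i).coeff (d i).toNat := by
  classical
  induction s using Finset.induction_on with
  | empty => simp
  | insert a s ha ih =>
    have hs : ∀ i ∈ s, VanishesAbove (f i) (d i) := fun i hi => h i (mem_insert_of_mem hi)
    rw [prod_insert ha, sum_insert ha, prod_insert ha, (h a (mem_insert_self a s)).coeff_mul
      (prod hs), ih hs]

variable {n : Type*} [Fintype n] [DecidableEq n] {M : Matrix n n R[X]} {r c : n → ℤ}

lemma det (h : ∀ i j, VanishesAbove (M i j) (r i + c j)) :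
    VanishesAbove M.det (∑ i, r i + ∑ j, c j) := by
  intro t ht
  rw [Matrix.det_apply, finsetSum_coeff]
  refine sum_eq_zero fun σ _ => ?_
  have hσ : VanishesAbove (∏ i, M (σ i) i) (∑ i, r i + ∑ j, c j) := by
    rw [← Equiv.sum_comp σ r, ← sum_add_distrib]
    exact prod fun i _ => h _ _
  rw [coeff_smul, hσ t ht, smul_zero]

lemma coeff_det (h : ∀ i j, VanishesAbove (M i j) (r i + c j)) :
    M.det.coeff (∑ i, r i + ∑ j, c j).toNat
      = (Matrix.of fun i j => (M i j).coeff (r i + c j).toNat).det := by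
  simp only [Matrix.det_apply, finsetSum_coeff, coeff_smul, Matrix.of_apply]
  refine sum_congr rfl fun σ _ => ?_
  rw [← Equiv.sum_comp σ r, ← sum_add_distrib, coeff_prod fun i _ => h _ _]

lemma iterate_derivative (h : VanishesAbove p b) (j : ℕ) :
    VanishesAbove (derivative^[j] p) (b - j) := fun n hn => by
  rw [coeff_iterate_derivative, h (n + j) (by push_cast; omega), smul_zero]

end VanishesAbove

lemma vanishesAbove_natDegree (p : R[X]) : VanishesAbove p p.natDegree :=
  VanishesAbove.of_natDegree_le le_rfl

lemma vanishesAbove_iterate_derivative_natDegree (p : R[X]) (j : ℕ) :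
    VanishesAbove (derivative^[j] p) (p.natDegree + -(j : ℤ)) := by
  simpa only [← sub_eq_add_neg] using (vanishesAbove_natDegree p).iterate_derivative j

lemma coeff_iterate_derivative_natDegree_sub (p : R[X]) (j : ℕ) :
    (derivative^[j] p).coeff ((p.natDegree : ℤ) - j).toNat
      = (p.natDegree.descFactorial j : R) * p.leadingCoeff := by
  rw [coeff_iterate_derivative, nsmul_eq_mul, leadingCoeff]
  rcases le_or_gt j p.natDegree with hj | hj
  · rw [show ((p.natDegree : ℤ) - j).toNat + j = p.natDegree by omega]
  · rw [Nat.descFactorial_eq_zero_iff_lt.2 hj, Nat.cast_zero, zero_mul,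
      coeff_eq_zero_of_natDegree_lt (by omega), mul_zero]

end DegreeBounds

section Wronskian

/-- The degree of `WrP f` when the `f i` are nonzero with distinct degrees. -/
def wronskianDegree {m : ℕ} (f : Fin m → ℝ[X]) : ℤ :=
  ∑ i, ((f i).natDegree : ℤ) - ∑ i : Fin m, (i : ℤ)

variable {m : ℕ} (f : Fin m → ℝ[X])

lemma vanishesAbove_wrP : VanishesAbove (WrP f) (wronskianDegree f) := by
  have h := VanishesAbove.det (M := Matrix.of fun i j : Fin m => derivative^[j] (f i))
    fun i j => vanishesAbove_iterate_derivative_natDegree (f i) j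
  rwa [sum_neg_distrib, ← sub_eq_add_neg] at h

lemma coeff_wrP_wronskianDegree_eq_det :
    (WrP f).coeff (wronskianDegree f).toNat = (Matrix.of fun i j : Fin m =>
      (derivative^[j] (f i)).coeff ((f i).natDegree + -(j : ℤ)).toNat).det := by
  have h := VanishesAbove.coeff_det (M := Matrix.of fun i j : Fin m => derivative^[j] (f i))
    fun i j => vanishesAbove_iterate_derivative_natDegree (f i) j
  rwa [sum_neg_distrib, ← sub_eq_add_neg] at h

/-- The leading coefficients factor out of the rows, leaving the matrix of falling factorials
`(d_i)_j`, which is a Vandermonde matrix in the degrees `d_i` after column operations. -/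
lemma coeff_wrP_wronskianDegree :
    (WrP f).coeff (wronskianDegree f).toNat = (∏ i, (f i).leadingCoeff) *
      ∏ i, ∏ j ∈ Ioi i, (((f j).natDegree : ℝ) - (f i).natDegree) := by
  have hentry : (Matrix.of fun i j : Fin m =>
      (derivative^[j] (f i)).coeff ((f i).natDegree + -(j : ℤ)).toNat)
      = Matrix.of fun i (j : Fin m) =>
        (f i).leadingCoeff * (descPochhammer ℝ (j : ℕ)).eval ((f i).natDegree : ℝ) := by
    ext i j
    simp only [Matrix.of_apply]
    rw [← sub_eq_add_neg, coeff_iterate_derivative_natDegree_sub,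
      descPochhammer_eval_eq_descFactorial, mul_comm]
  rw [coeff_wrP_wronskianDegree_eq_det, hentry]
  refine (Matrix.det_mul_column (fun i => (f i).leadingCoeff) fun i (j : Fin m) =>
    (descPochhammer ℝ (j : ℕ)).eval ((f i).natDegree : ℝ)).trans ?_
  rw [← Matrix.det_vandermonde, Matrix.det_eval_matrixOfPolynomials_eq_det_vandermonde _ _
      (fun j => descPochhammer_natDegree ℝ (j : ℕ)) (fun j => monic_descPochhammer ℝ (j : ℕ))]
  rfl

variable {f} (hf : ∀ i, f i ≠ 0) (hd : Injective fun i => (f i).natDegree)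
include hf hd

lemma coeff_wrP_wronskianDegree_ne_zero : (WrP f).coeff (wronskianDegree f).toNat ≠ 0 := by
  rw [coeff_wrP_wronskianDegree]
  refine mul_ne_zero (prod_ne_zero_iff.2 fun i _ => leadingCoeff_ne_zero.2 (hf i))
    (prod_ne_zero_iff.2 fun i _ => prod_ne_zero_iff.2 fun j hj => sub_ne_zero.2 ?_)
  exact_mod_cast hd.ne (mem_Ioi.1 hj).ne'

lemma wrP_ne_zero : WrP f ≠ 0 := fun h =>
  coeff_wrP_wronskianDegree_ne_zero hf hd (by rw [h, coeff_zero])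

lemma natDegree_wrP : ((WrP f).natDegree : ℤ) = wronskianDegree f := by
  have hnonneg : 0 ≤ wronskianDegree f :=
    not_lt.1 fun hneg => wrP_ne_zero hf hd ((vanishesAbove_wrP f).eq_zero hneg)
  rw [natDegree_eq_of_le_of_coeff_ne_zero (vanishesAbove_wrP f).natDegree_le
    (coeff_wrP_wronskianDegree_ne_zero hf hd)]
  omega

end Wronskian

section OmittedWronskian

variable {n : ℕ} {f : Fin (n + 1) → ℝ[X]} (hf : ∀ i, f i ≠ 0)
  (hd : Injective fun i => (f i).natDegree)
include hf hd

lemma wrP_succAbove_ne_zero (j : Fin (n + 1)) : WrP (fun i => f (j.succAbove i)) ≠ 0 :=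
  wrP_ne_zero (fun _ => hf _) (hd.comp Fin.succAbove_right_injective)

lemma natDegree_wrP_succAbove_add (j : Fin (n + 1)) :
    ((WrP fun i => f (j.succAbove i)).natDegree : ℤ) + (f j).natDegree
      = ∑ i, ((f i).natDegree : ℤ) - ∑ i : Fin n, (i : ℤ) := by
  rw [natDegree_wrP (fun _ => hf _) (hd.comp Fin.succAbove_right_injective), wronskianDegree,
    Fin.sum_univ_succAbove _ j]
  ring

lemma injective_natDegree_wrP_succAbove :
    Injective fun j : Fin (n + 1) => (WrP fun i => f (j.succAbove i)).natDegree := by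
  intro j j' h
  have hj := natDegree_wrP_succAbove_add hf hd j
  have hj' := natDegree_wrP_succAbove_add hf hd j'
  exact hd (by simp only at h ⊢; omega)

end OmittedWronskian

section Hermite

lemma natDegree_hermN_le_and_coeff : ∀ n, (hermN n).natDegree ≤ n ∧ (hermN n).coeff n = 2 ^ n
  | 0 => by simp [hermN]
  | 1 => by simp [hermN]
  | n + 2 => by
    obtain ⟨hdeg₁, hcoeff₁⟩ := natDegree_hermN_le_and_coeff (n + 1)
    obtain ⟨hdeg₀, -⟩ := natDegree_hermN_le_and_coeff n
    have hX : (C 2 * X * hermN (n + 1)).natDegree ≤ n + 2 := by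
      rw [mul_assoc]
      have := natDegree_X_le (R := ℝ)
      exact (natDegree_C_mul_le _ _).trans (natDegree_mul_le.trans (by omega))
    have hC : (C (2 * ((n : ℝ) + 1)) * hermN n).natDegree ≤ n + 2 :=
      (natDegree_C_mul_le _ _).trans (by omega)
    refine ⟨(natDegree_sub_le_of_le hX hC).trans_eq (max_self _), ?_⟩
    rw [hermN, coeff_sub, coeff_C_mul, mul_assoc, coeff_C_mul, coeff_X_mul, hcoeff₁,
      coeff_eq_zero_of_natDegree_lt (by omega : (hermN n).natDegree < n + 2)]
    ring

lemma natDegree_hermN (n : ℕ) : (hermN n).natDegree = n :=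
  natDegree_eq_of_le_of_coeff_ne_zero (natDegree_hermN_le_and_coeff n).1
    (by rw [(natDegree_hermN_le_and_coeff n).2]; positivity)

lemma hermN_ne_zero (n : ℕ) : hermN n ≠ 0 := fun h => by
  have h2 := (natDegree_hermN_le_and_coeff n).2
  rw [h, coeff_zero] at h2
  exact absurd h2.symm (by positivity)

lemma Herm_natCast (n : ℕ) : Herm n = hermN n := by simp [Herm]

end Hermite

/-- `d/dx (e^{-x²} p(x)) = e^{-x²} (gaussDerivative p)(x)`. -/
def gaussDerivative (p : ℝ[X]) : ℝ[X] := derivative p - C 2 * X * p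

lemma VanishesAbove.iterate_gaussDerivative {p : ℝ[X]} {b : ℤ} (h : VanishesAbove p b)
    (j : ℕ) :
    VanishesAbove (gaussDerivative^[j] p) (b + j) := by
  induction j with
  | zero => simpa using h
  | succ j ih =>
    intro n hn
    rw [Function.iterate_succ_apply', gaussDerivative, coeff_sub, coeff_derivative, mul_assoc,
      coeff_C_mul, ih (n + 1) (by push_cast at hn ⊢; omega)]
    cases n with
    | zero => simp
    | succ n => rw [coeff_X_mul, ih n (by push_cast at hn ⊢; omega)]; ring

lemma coeff_iterate_gaussDerivative (p : ℝ[X]) (j : ℕ) :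
    (gaussDerivative^[j] p).coeff (p.natDegree + j) = (-2) ^ j * p.leadingCoeff := by
  induction j with
  | zero => rw [Function.iterate_zero_apply, add_zero, pow_zero, one_mul, leadingCoeff]
  | succ j ih =>
    rw [Function.iterate_succ_apply', gaussDerivative, coeff_sub, coeff_derivative, mul_assoc,
      coeff_C_mul, ← add_assoc, coeff_X_mul, ih,
      (vanishesAbove_natDegree p).iterate_gaussDerivative j _ (by push_cast; omega)]
    ring

section Calculus

lemma iteratedDeriv_eval (P : ℝ[X]) (j : ℕ) :
    iteratedDeriv j (fun x => P.eval x) = fun x => (derivative^[j] P).eval x := by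
  induction j generalizing P with
  | zero => simp
  | succ j ih =>
    have hderiv : deriv (fun x => P.eval x) = fun x => (derivative P).eval x :=
      funext fun _ => P.deriv
    rw [iteratedDeriv_succ', hderiv, ih, Function.iterate_succ_apply]

lemma deriv_exp_neg_sq_mul_eval (q : ℝ[X]) :
    deriv (fun t => Real.exp (-t ^ 2) * q.eval t)
      = fun t => Real.exp (-t ^ 2) * (gaussDerivative q).eval t := by
  funext t
  have hexp : HasDerivAt (fun t : ℝ => Real.exp (-t ^ 2)) (Real.exp (-t ^ 2) * -(2 * t)) t := by
    simpa using ((hasDerivAt_pow 2 t).neg).exp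
  rw [show (fun t => Real.exp (-t ^ 2) * q.eval t)
      = (fun t => Real.exp (-t ^ 2)) * fun t => q.eval t from rfl,
    (hexp.mul (q.hasDerivAt t)).deriv]
  simp only [gaussDerivative, eval_sub, eval_mul, eval_C, eval_X]
  ring

lemma iteratedDeriv_exp_neg_sq_mul_eval (p : ℝ[X]) (j : ℕ) :
    iteratedDeriv j (fun t => Real.exp (-t ^ 2) * p.eval t)
      = fun t => Real.exp (-t ^ 2) * (gaussDerivative^[j] p).eval t := by
  induction j generalizing p with
  | zero => simp
  | succ j ih =>
    rw [iteratedDeriv_succ', deriv_exp_neg_sq_mul_eval, ih, Function.iterate_succ_apply]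

lemma Wr_eval {m : ℕ} (g : Fin m → ℝ[X]) (x : ℝ) :
    Wr (fun i t => (g i).eval t) x = (WrP g).eval x := by
  rw [Wr, WrP, ← coe_evalRingHom, RingHom.map_det]
  congr 1
  ext i j
  simp [iteratedDeriv_eval]

end Calculus

lemma Matrix.det_eq_mul_det_submatrix_castSucc {R : Type*} [CommRing R] {n : ℕ}
    (A : Matrix (Fin (n + 1)) (Fin (n + 1)) R) (h : ∀ j : Fin n, A (Fin.last n) j.castSucc = 0) :
    A.det = A (Fin.last n) (Fin.last n) * (A.submatrix Fin.castSucc Fin.castSucc).det := by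
  rw [Matrix.det_succ_row A (Fin.last n), Fin.sum_univ_castSucc]
  simp [h, ← two_mul, pow_mul]

section GaussWronskian

variable {l : ℕ}

/-- The polynomial matrix whose determinant is `e^{x²} Wr[g_1, …, g_l, e^{-x²} p]`. -/
def gaussWrMatrix (g : Fin l → ℝ[X]) (p : ℝ[X]) : Matrix (Fin (l + 1)) (Fin (l + 1)) ℝ[X] :=
  Matrix.of (Fin.snoc (fun i (j : Fin (l + 1)) => derivative^[j] (g i))
    fun j => gaussDerivative^[j] p)

lemma Wr_snoc_exp_neg_sq_mul_eval (g : Fin l → ℝ[X]) (p : ℝ[X]) (x : ℝ) :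
    Wr (Fin.snoc (fun i t => (g i).eval t) fun t => Real.exp (-t ^ 2) * p.eval t) x
      = Real.exp (-x ^ 2) * (gaussWrMatrix g p).det.eval x := by
  have hM : (Matrix.of fun i j : Fin (l + 1) => iteratedDeriv j
      ((Fin.snoc (fun i t => (g i).eval t) fun t => Real.exp (-t ^ 2) * p.eval t :
        Fin (l + 1) → ℝ → ℝ) i) x)
      = Matrix.diagonal (Fin.snoc (fun _ => 1) (Real.exp (-x ^ 2)))
        * (evalRingHom x).mapMatrix (gaussWrMatrix g p) := by
    ext i j
    rw [Matrix.diagonal_mul]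
    refine Fin.lastCases ?_ (fun i => ?_) i
    · simp [gaussWrMatrix, iteratedDeriv_exp_neg_sq_mul_eval]
    · simp [gaussWrMatrix, iteratedDeriv_eval]
  rw [Wr, hM, Matrix.det_mul, Matrix.det_diagonal, Fin.prod_univ_castSucc, ← RingHom.map_det]
  simp

/-- Row `i < l` has degree `deg g_i - j` in column `j`, the last row `deg p + j ≤ deg p + 2l - j`;
with these bounds the top coefficient matrix has last row `(0, …, 0, (-2)^l lc(p))`. -/
lemma gaussWrMatrix_vanishesAbove (g : Fin l → ℝ[X]) (p : ℝ[X]) (i j : Fin (l + 1)) :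
    VanishesAbove (gaussWrMatrix g p i j)
      ((Fin.snoc (fun i => ((g i).natDegree : ℤ)) (p.natDegree + 2 * l) : Fin (l + 1) → ℤ) i
        + -(j : ℤ)) := by
  refine Fin.lastCases ?_ (fun i => ?_) i
  · simp only [gaussWrMatrix, Matrix.of_apply, Fin.snoc_last]
    exact ((vanishesAbove_natDegree p).iterate_gaussDerivative j).mono (by omega)
  · simp only [gaussWrMatrix, Matrix.of_apply, Fin.snoc_castSucc]
    exact vanishesAbove_iterate_derivative_natDegree (g i) j

lemma det_gaussWrMatrix_ne_zero {g : Fin l → ℝ[X]} {p : ℝ[X]} (hg : ∀ i, g i ≠ 0)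
    (hd : Injective fun i => (g i).natDegree) (hp : p ≠ 0) : (gaussWrMatrix g p).det ≠ 0 := by
  intro h
  have htop := VanishesAbove.coeff_det (gaussWrMatrix_vanishesAbove g p)
  set A := Matrix.of fun i j : Fin (l + 1) => (gaussWrMatrix g p i j).coeff
    ((Fin.snoc (fun i => ((g i).natDegree : ℤ)) (p.natDegree + 2 * l) : Fin (l + 1) → ℤ) i
      + -(j : ℤ)).toNat
  have hrow : ∀ j : Fin l, A (Fin.last l) j.castSucc = 0 := fun j => by
    simp only [A, gaussWrMatrix, Matrix.of_apply, Fin.snoc_last, Fin.val_castSucc]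
    exact (vanishesAbove_natDegree p).iterate_gaussDerivative j _ (by omega)
  have hcorner : A (Fin.last l) (Fin.last l) = (-2) ^ l * p.leadingCoeff := by
    simp only [A, gaussWrMatrix, Matrix.of_apply, Fin.snoc_last, Fin.val_last]
    rw [show ((p.natDegree : ℤ) + 2 * l + -l).toNat = p.natDegree + l by omega,
      coeff_iterate_gaussDerivative]
  have hblock : A.submatrix Fin.castSucc Fin.castSucc = Matrix.of fun i j : Fin l =>
      (derivative^[j] (g i)).coeff ((g i).natDegree + -(j : ℤ)).toNat := by
    ext i j
    simp [A, gaussWrMatrix]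
  rw [h, coeff_zero, Matrix.det_eq_mul_det_submatrix_castSucc A hrow, hcorner, hblock,
    ← coeff_wrP_wronskianDegree_eq_det] at htop
  exact mul_ne_zero (mul_ne_zero (pow_ne_zero _ (by norm_num)) (leadingCoeff_ne_zero.2 hp))
    (coeff_wrP_wronskianDegree_ne_zero hg hd) htop.symm

end GaussWronskian

section ExceptionalHermite

variable {k : ℕ → ℕ} {l : ℕ}

def htilP (k : ℕ → ℕ) (l j : ℕ) : ℝ[X] :=
  WrP fun i : Fin (l - 1) => Herm (k (if i.1 + 1 < j then i.1 + 1 else i.1 + 2) : ℤ)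

lemma eta_eq_eval (k : ℕ → ℕ) (l : ℕ) : eta k l = fun x => (etaP k l).eval x :=
  funext fun x => Wr_eval _ x

lemma htil_eq_eval (k : ℕ → ℕ) (l j : ℕ) : htil k l j = fun x => (htilP k l j).eval x :=
  funext fun x => Wr_eval _ x

lemma htilP_succ (k : ℕ → ℕ) (n : ℕ) (j : Fin (n + 1)) :
    htilP k (n + 1) (j + 1) = WrP fun i : Fin n => hermN (k (j.succAbove i + 1)) := by
  simp only [htilP, Herm_natCast]
  congr! 4 with i
  unfold Fin.succAbove
  split_ifs <;> simp_all [Fin.lt_def]; omega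

lemma Bop_eval (k : ℕ → ℕ) (l : ℕ) (p : ℝ[X]) (x : ℝ) :
    Bop k l (fun t => p.eval t) x = (-1) ^ (l / 2) * Real.exp (x ^ 2) / (etaP k l).eval x ^ l *
      (Real.exp (-x ^ 2) * (gaussWrMatrix (fun i : Fin l => htilP k l (i + 1)) p).det.eval x) := by
  rw [Bop, eta_eq_eval, ← Wr_snoc_exp_neg_sq_mul_eval]
  simp only [htil_eq_eval]

lemma injective_k_succ (hmono : ∀ i, 1 ≤ i → i < l → k i < k (i + 1)) :
    Injective fun i : Fin l => k (i + 1) := by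
  have hk : StrictMonoOn k (Set.Icc 1 l) := strictMonoOn_of_lt_add_one Set.ordConnected_Icc
    fun a _ ha ha' => hmono a ha.1 (by have := ha'.2; omega)
  intro i j h
  have := hk.injOn (by simp only [Set.mem_Icc]; omega) (by simp only [Set.mem_Icc]; omega) h
  omega

variable (hk : Injective fun i : Fin l => k (i + 1))
include hk

lemma hermN_k_succ_ne_zero_and_injective :
    (∀ i : Fin l, hermN (k (i + 1)) ≠ 0) ∧
      Injective fun i : Fin l => (hermN (k (i + 1))).natDegree :=
  ⟨fun _ => hermN_ne_zero _, by simpa only [natDegree_hermN] using hk⟩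

lemma etaP_ne_zero : etaP k l ≠ 0 := by
  unfold etaP
  simp only [Herm_natCast]
  exact wrP_ne_zero (hermN_k_succ_ne_zero_and_injective hk).1
    (hermN_k_succ_ne_zero_and_injective hk).2

lemma htilP_ne_zero_and_injective :
    (∀ j : Fin l, htilP k l (j + 1) ≠ 0) ∧
      Injective fun j : Fin l => (htilP k l (j + 1)).natDegree := by
  cases l with
  | zero => exact ⟨fun j => j.elim0, injective_of_subsingleton _⟩
  | succ n =>
    obtain ⟨hf, hd⟩ := hermN_k_succ_ne_zero_and_injective hk
    simp only [htilP_succ]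
    exact ⟨wrP_succAbove_ne_zero (f := fun i => hermN (k (i + 1))) hf hd,
      injective_natDegree_wrP_succAbove (f := fun i => hermN (k (i + 1))) hf hd⟩

end ExceptionalHermite

theorem stmt_14_general (l : ℕ) (k : ℕ → ℕ)
    (hmono : ∀ i, 1 ≤ i → i < l → k i < k (i + 1))
    (p : Polynomial ℝ)
    (hBp : ∀ x : ℝ, eta k l x ≠ 0 → Bop k l (fun t => p.eval t) x = 0) :
    p = 0 := by
  by_contra hp
  have hk := injective_k_succ hmono
  obtain ⟨hg, hd⟩ := htilP_ne_zero_and_injective hk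
  have hW : (gaussWrMatrix (fun i : Fin l => htilP k l (i + 1)) p).det ≠ 0 :=
    det_gaussWrMatrix_ne_zero hg hd hp
  obtain ⟨x, hx⟩ := ((finite_setOfPred_isRoot (etaP_ne_zero hk)).union
    (finite_setOfPred_isRoot hW)).infinite_compl.nonempty
  simp only [Set.mem_compl_iff, Set.mem_union, Set.mem_ofPred_eq, IsRoot, not_or] at hx
  have hBx := hBp x (by rw [eta_eq_eval]; exact hx.1)
  rw [Bop_eval] at hBx
  simp [hx.1, hx.2, Real.exp_ne_zero] at hBx

/-- The linear transformation `B` is injective on `U`. -/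
theorem stmt_14 (l : ℕ) (hl : 1 ≤ l) (k : ℕ → ℕ) (hk1 : 1 ≤ k 1)
    (hmono : ∀ i, 1 ≤ i → i < l → k i < k (i + 1))
    (p : Polynomial ℝ) (hp : p ∈ Uspan k l)
    (hBp : ∀ x : ℝ, eta k l x ≠ 0 → Bop k l (fun t => p.eval t) x = 0) :
    p = 0 :=
  stmt_14_general l k hmono p hBp

end
end
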